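/- arXiv:1906.03938 — 5 statements merged into one kernel-verified Lean document; each statement's English description precedes it below -/
import Mathlib

section
/- Let m ≥ 2, let B₀,…,B_m be n×n complex matrices, λ ∈ ℂ, and u ∈ ℂⁿ with ∑_{i=0}^{m} Tᵢ(λ) • (Bᵢ u) = 0, where Tᵢ is the i-th Chebyshev polynomial of the first kind. Then the vectors vᵢ := Tᵢ(λ) • u (i = 0,…,m−1) satisfy the block rows of the Chebyshev linearization: v₁ = λ • v₀; v_{i−1} + v_{i+1} = 2λ • vᵢ for 1 ≤ i ≤ m−2; and −∑_{i=0}^{m−3} Bᵢ vᵢ + (B_m − B_{m−2}) v_{m−2} − B_{m−1} v_{m−1} = 2λ • (B_m v_{m−1}). -/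
open Finset Polynomial.Chebyshev

/-- If `u` is a null vector of the Chebyshev interpolant `T̃(λ) = ∑ᵢ Tᵢ(λ) Bᵢ`, then the
vectors `vᵢ = Tᵢ(λ) • u`, `i = 0,…,m-1`, satisfy the block rows of the Chebyshev
(colleague-type) linearization pencil. -/
theorem chebyshev_linearization_of_nlevp (n m : ℕ) (hm : 2 ≤ m)
    (B : ℕ → Matrix (Fin n) (Fin n) ℂ)
    (lam : ℂ) (u : Fin n → ℂ)
    (hu : ∑ i ∈ range (m + 1), ((T ℂ i).eval lam) • (B i).mulVec u = 0)
    (v : ℕ → Fin n → ℂ)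
    (hv : ∀ i, v i = ((T ℂ i).eval lam) • u) :
    v 1 = lam • v 0 ∧
    (∀ i, 1 ≤ i → i ≤ m - 2 → v (i - 1) + v (i + 1) = (2 * lam) • v i) ∧
    -∑ i ∈ range (m - 2), (B i).mulVec (v i) + (B m - B (m - 2)).mulVec (v (m - 2))
        - (B (m - 1)).mulVec (v (m - 1)) = (2 * lam) • (B m).mulVec (v (m - 1)) := by
  have hT : ∀ k : ℕ, ((T ℂ ((k : ℤ) + 2)).eval lam)
      = 2 * lam * ((T ℂ ((k : ℤ) + 1)).eval lam) - ((T ℂ (k : ℤ)).eval lam) := by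
    intro k
    rw [Polynomial.Chebyshev.T_add_two]
    simp [mul_assoc]
  obtain ⟨p, rfl⟩ : ∃ p, m = p + 2 := ⟨m - 2, by omega⟩
  refine ⟨?_, ?_, ?_⟩
  · simp [hv]
  · intro i h1 h2
    obtain ⟨k, rfl⟩ : ∃ k, i = k + 1 := ⟨i - 1, by omega⟩
    simp only [hv, Nat.add_sub_cancel]
    have : ((k : ℤ) + 1) + 1 = (k : ℤ) + 2 := by ring
    push_cast
    rw [this, hT k]
    module
  · have e1 : p + 2 - 1 = p + 1 := rfl
    have e2 : p + 2 - 2 = p := rfl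
    rw [e1, e2]
    rw [Finset.sum_range_succ, Finset.sum_range_succ, Finset.sum_range_succ] at hu
    have hb : ∀ i : ℕ, (B i).mulVec (v i) = ((T ℂ i).eval lam) • (B i).mulVec u := by
      intro i; rw [hv, Matrix.mulVec_smul]
    rw [Matrix.sub_mulVec]
    simp only [hv, Matrix.mulVec_smul]
    push_cast at hu ⊢
    rw [hT p] at hu
    linear_combination (norm := module) -hu
end

section
/- Let m ≥ 2, let B₀,…,B_m be n×n complex matrices, λ ∈ ℂ, and u, v₀,…,v_{m−1} ∈ ℂⁿ with v₀ = u. If the block rows of the Chebyshev linearization hold — v₁ = λ • v₀; v_{i−1} + v_{i+1} = 2λ • vᵢ for 1 ≤ i ≤ m−2; and −∑_{i=0}^{m−3} Bᵢ vᵢ + (B_m − B_{m−2}) v_{m−2} − B_{m−1} v_{m−1} = 2λ • (B_m v_{m−1}) — then vᵢ = Tᵢ(λ) • u for every i = 0,…,m−1 and ∑_{i=0}^{m} Tᵢ(λ) • (Bᵢ u) = 0, where Tᵢ is the i-th Chebyshev polynomial of the first kind. -/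
open Finset Polynomial.Chebyshev

/-- If `(λ, v₀,…,v_{m-1})` with `v₀ = u` satisfies the block rows of the Chebyshev
(colleague-type) linearization pencil, then `vᵢ = Tᵢ(λ) • u` for `i = 0,…,m-1` and `u` is a
null vector of the Chebyshev interpolant `T̃(λ) = ∑ᵢ Tᵢ(λ) Bᵢ`. -/
theorem nlevp_of_chebyshev_linearization (n m : ℕ) (hm : 2 ≤ m)
    (B : ℕ → Matrix (Fin n) (Fin n) ℂ)
    (lam : ℂ) (u : Fin n → ℂ) (v : ℕ → Fin n → ℂ)
    (hv0 : v 0 = u)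
    (hrow1 : v 1 = lam • v 0)
    (hrows : ∀ i, 1 ≤ i → i ≤ m - 2 → v (i - 1) + v (i + 1) = (2 * lam) • v i)
    (hlast : -∑ i ∈ range (m - 2), (B i).mulVec (v i)
        + (B m - B (m - 2)).mulVec (v (m - 2))
        - (B (m - 1)).mulVec (v (m - 1)) = (2 * lam) • (B m).mulVec (v (m - 1))) :
    (∀ i, i ≤ m - 1 → v i = ((T ℂ i).eval lam) • u) ∧
    ∑ i ∈ range (m + 1), ((T ℂ i).eval lam) • (B i).mulVec u = 0 := by
  obtain ⟨k, rfl⟩ : ∃ k, m = 2 + k := ⟨m - 2, by omega⟩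
  simp only [show 2 + k - 2 = k from by omega, show 2 + k - 1 = k + 1 from by omega]
    at hrows hlast ⊢
  -- Chebyshev eval recurrence
  have cheb : ∀ i : ℕ, (T ℂ (i + 2 : ℕ)).eval lam
      = 2 * lam * (T ℂ (i + 1 : ℕ)).eval lam - (T ℂ i).eval lam := by
    intro i
    have h := T_add_two ℂ (i : ℤ)
    rw [show ((i + 2 : ℕ) : ℤ) = (i : ℤ) + 2 by push_cast; ring,
        show ((i + 1 : ℕ) : ℤ) = (i : ℤ) + 1 by push_cast; ring, h]
    simp [mul_assoc]
  have key : ∀ i, i + 1 ≤ k + 1 →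
      v i = ((T ℂ i).eval lam) • u ∧ v (i + 1) = ((T ℂ (i + 1 : ℕ)).eval lam) • u := by
    intro i
    induction i with
    | zero =>
      intro _
      refine ⟨by simp [hv0], ?_⟩
      rw [hrow1, hv0]
      simp
    | succ i ih =>
      intro hi
      have h1 := ih (by omega)
      refine ⟨h1.2, ?_⟩
      have hr := hrows (i + 1) (by omega) (by omega)
      simp only [Nat.add_sub_cancel] at hr
      have : v (i + 1 + 1) = (2 * lam) • v (i + 1) - v i := by
        rw [← hr]; abel
      rw [this, h1.1, h1.2, cheb i, smul_smul, sub_smul]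
  have part1 : ∀ i, i ≤ k + 1 → v i = ((T ℂ i).eval lam) • u := by
    intro i hi
    rcases Nat.lt_or_ge i (k + 1) with h | h
    · exact (key i (by omega)).1
    · have : i = k + 1 := by omega
      subst this
      exact (key k (by omega)).2
  refine ⟨part1, ?_⟩
  have hvk := part1 k (by omega)
  have hvk1 := part1 (k + 1) (by omega)
  have hTm : ((T ℂ (2 + k : ℕ)).eval lam) • u = (2 * lam) • v (k + 1) - v k := by
    rw [show 2 + k = k + 2 by ring, cheb k, sub_smul, hvk, hvk1, smul_smul]
  have hsum : ∀ i ∈ range k, ((T ℂ i).eval lam) • (B i).mulVec u = (B i).mulVec (v i) := by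
    intro i hi
    rw [part1 i (by simp at hi; omega), Matrix.mulVec_smul]
  rw [show 2 + k + 1 = k + 3 by ring, Finset.sum_range_succ, Finset.sum_range_succ,
    Finset.sum_range_succ, Finset.sum_congr rfl hsum]
  have hB : (B (k + 2)).mulVec (((T ℂ (k + 2 : ℕ)).eval lam) • u)
      = (2 * lam) • (B (2 + k)).mulVec (v (k + 1)) - (B (2 + k)).mulVec (v k) := by
    rw [show k + 2 = 2 + k by ring, hTm, Matrix.mulVec_sub, Matrix.mulVec_smul]
  simp only [← Matrix.mulVec_smul]
  rw [← hvk, ← hvk1, hB, ← hlast, Matrix.sub_mulVec]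
  abel
end

section
/- Let m = 2q with q ≥ 1, let B₀,…,B_m be n×n complex matrices, and let y₀,…,y_{m−1} ∈ ℂⁿ. Suppose v₀,…,v_{m−1} ∈ ℂⁿ satisfy: v₁ = y₀ and v_{2i+1} = y_{2i} − v_{2i−1} for the odd blocks; v_{2i} = y_{2i−1} − v_{2i−2} for the even blocks (i ≥ 1); and the last block row −∑_{i=0}^{m−3} Bᵢ vᵢ + (B_m − B_{m−2}) v_{m−2} − B_{m−1} v_{m−1} = y_{m−1}. Define ŷ_{−1} = 0, ŷ₁ = y₁, ŷ_{2i+1} = y_{2i+1} − ŷ_{2i−1}. Then v₀ satisfies the reduced system G v₀ = b with G = ∑_{i=0}^{q} (−1)^{i+1} • B_{2i} and b = y_{m−1} + ∑_{i=0}^{q−1} B_{2i+1} v_{2i+1} + ∑_{i=1}^{q−1} B_{2i} ŷ_{2i−1} − B_{2q} ŷ_{2q−3}. -/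
open Finset

/-- For the Chebyshev linearization with `m = 2q` even, eliminating the blocks
`v₁,…,v_{m-1}` from the system `𝒜w = y` reduces the last block row to the `n × n`
system `G v₀ = b` with `G = ∑_{i=0}^{q} (-1)^{i+1} B_{2i}` and
`b = y_{m-1} + ∑_{i=0}^{q-1} B_{2i+1} v_{2i+1} + ∑_{i=1}^{q-1} B_{2i} ŷ_{2i-1}
  - B_{2q} ŷ_{2q-3}`, where `ŷ₋₁ = 0`, `ŷ₁ = y₁`, `ŷ_{2i+1} = y_{2i+1} - ŷ_{2i-1}`. -/
theorem chebyshev_reduced_system_even (n q : ℕ) (hq : 1 ≤ q)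
    (B : ℕ → Matrix (Fin n) (Fin n) ℂ)
    (y v : ℕ → Fin n → ℂ) (yh : ℤ → Fin n → ℂ)
    (hv1 : v 1 = y 0)
    (hodd : ∀ i, 1 ≤ i → i ≤ q - 1 → v (2 * i + 1) = y (2 * i) - v (2 * i - 1))
    (heven : ∀ i, 1 ≤ i → i ≤ q - 1 → v (2 * i) = y (2 * i - 1) - v (2 * i - 2))
    (hlast : -∑ i ∈ range (2 * q - 2), (B i).mulVec (v i)
        + (B (2 * q) - B (2 * q - 2)).mulVec (v (2 * q - 2))
        - (B (2 * q - 1)).mulVec (v (2 * q - 1)) = y (2 * q - 1))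
    (hyhneg : yh (-1) = 0)
    (hyh1 : yh 1 = y 1)
    (hyhrec : ∀ i : ℕ, 1 ≤ i → yh (2 * (i : ℤ) + 1) = y (2 * i + 1) - yh (2 * (i : ℤ) - 1)) :
    (∑ i ∈ range (q + 1), ((-1 : ℂ)) ^ (i + 1) • B (2 * i)).mulVec (v 0) =
      y (2 * q - 1) + ∑ i ∈ range q, (B (2 * i + 1)).mulVec (v (2 * i + 1))
        + ∑ i ∈ Icc 1 (q - 1), (B (2 * i)).mulVec (yh (2 * (i : ℤ) - 1))
        - (B (2 * q)).mulVec (yh (2 * (q : ℤ) - 3)) := by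
  obtain ⟨k, rfl⟩ : ∃ k, q = k + 1 := ⟨q - 1, (Nat.succ_pred_eq_of_pos hq).symm⟩
  -- closed form for even blocks
  have key : ∀ i, i ≤ k → v (2 * i) = yh (2 * (i : ℤ) - 1) + ((-1 : ℂ)) ^ i • v 0 := by
    intro i hi
    induction i with
    | zero => simp [hyhneg]
    | succ j ih =>
      have hj : j ≤ k := Nat.le_of_succ_le hi
      have he := heven (j + 1) (by omega) (by omega)
      have e1 : 2 * (j + 1) - 1 = 2 * j + 1 := by omega
      have e2 : 2 * (j + 1) - 2 = 2 * j := by omega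
      rw [e1, e2] at he
      have hy : yh (2 * ((j : ℤ) + 1) - 1) = y (2 * j + 1) - yh (2 * (j : ℤ) - 1) := by
        cases j with
        | zero => simp [hyh1, hyhneg]
        | succ l =>
          have := hyhrec (l + 1) (by omega)
          push_cast at this ⊢
          rw [show (2 * ((l : ℤ) + 1 + 1) - 1) = 2 * ((l : ℤ) + 1) + 1 from by ring, this]
      rw [he, ih hj]
      push_cast
      rw [hy]
      funext x
      simp [pow_succ]
      ring
  -- now the main computation
  have e1 : 2 * (k + 1) - 1 = 2 * k + 1 := by omega
  have e2 : 2 * (k + 1) - 2 = 2 * k := by omega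
  rw [e1, e2] at hlast
  have split : ∀ m : ℕ, ∑ i ∈ range (2 * m), (B i).mulVec (v i)
      = ∑ i ∈ range m, (B (2 * i)).mulVec (v (2 * i))
        + ∑ i ∈ range m, (B (2 * i + 1)).mulVec (v (2 * i + 1)) := by
    intro m
    induction m with
    | zero => simp
    | succ j ih =>
      rw [show 2 * (j + 1) = 2 * j + 1 + 1 from by ring, sum_range_succ, sum_range_succ,
        ih, sum_range_succ, sum_range_succ]
      abel
  rw [split k] at hlast
  rw [e1, ← hlast]
  set v0 := v 0
  set A := ∑ i ∈ range k, (B (2 * i)).mulVec (yh (2 * (i : ℤ) - 1)) with hA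
  set P := ∑ i ∈ range k, ((-1 : ℂ)) ^ i • (B (2 * i)).mulVec v0 with hP
  have hS : ∑ i ∈ range k, (B (2 * i)).mulVec (v (2 * i)) = A + P := by
    rw [hA, hP, ← sum_add_distrib]
    refine sum_congr rfl fun i hi => ?_
    rw [key i (Nat.le_of_lt (mem_range.mp hi)), Matrix.mulVec_add, Matrix.mulVec_smul]
  have hT : ∑ i ∈ Icc 1 (k + 1 - 1), (B (2 * i)).mulVec (yh (2 * (i : ℤ) - 1))
      = A + (B (2 * k)).mulVec (yh (2 * (k : ℤ) - 1)) := by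
    have h1 := sum_range_succ (fun i => (B (2 * i)).mulVec (yh (2 * (i : ℤ) - 1))) k
    have h2 := sum_range_succ' (fun i => (B (2 * i)).mulVec (yh (2 * (i : ℤ) - 1))) k
    have h3 : ∑ i ∈ Icc 1 (k + 1 - 1), (B (2 * i)).mulVec (yh (2 * (i : ℤ) - 1))
        = ∑ i ∈ range k, (B (2 * (i + 1))).mulVec (yh (2 * ((i : ℤ) + 1) - 1)) := by
      rw [show Icc 1 (k + 1 - 1) = Ico 1 (k + 1) from by
          rw [Finset.Ico_add_one_right_eq_Icc, Nat.add_sub_cancel],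
        Finset.sum_Ico_eq_sum_range]
      refine sum_congr (by norm_num) fun i _ => ?_
      rw [add_comm 1 i]
      push_cast
      rfl
    rw [h3]
    have h4 : ∑ i ∈ range k, (B (2 * (i + 1))).mulVec (yh (2 * ((i : ℤ) + 1) - 1))
        = ∑ i ∈ range (k + 1), (B (2 * i)).mulVec (yh (2 * (i : ℤ) - 1)) := by
      rw [h2]
      simp [hyhneg]
    rw [h4, h1, ← hA]
  rw [hS, hT, sum_range_succ (fun i => (B (2 * i + 1)).mulVec (v (2 * i + 1))) k,
    key k le_rfl]
  have hG : (∑ i ∈ range (k + 1 + 1), ((-1 : ℂ)) ^ (i + 1) • B (2 * i)).mulVec v0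
      = -P + ((-1 : ℂ)) ^ (k + 1) • (B (2 * k)).mulVec v0
        + ((-1 : ℂ)) ^ k • (B (2 * (k + 1))).mulVec v0 := by
    have hmv : ∀ (s : Finset ℕ) (M : ℕ → Matrix (Fin n) (Fin n) ℂ),
        (∑ i ∈ s, M i).mulVec v0 = ∑ i ∈ s, (M i).mulVec v0 := by
      intro s M
      induction s using Finset.cons_induction with
      | empty => simp [Matrix.zero_mulVec]
      | cons a s ha ih => rw [Finset.sum_cons, Finset.sum_cons, Matrix.add_mulVec, ih]
    rw [hmv, sum_range_succ, sum_range_succ, hP]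
    simp only [Matrix.smul_mulVec]
    have hneg : ∑ i ∈ range k, ((-1 : ℂ)) ^ (i + 1) • (B (2 * i)).mulVec v0
        = -∑ i ∈ range k, ((-1 : ℂ)) ^ i • (B (2 * i)).mulVec v0 := by
      rw [← Finset.sum_neg_distrib]
      refine sum_congr rfl fun i _ => ?_
      rw [pow_succ, mul_comm, mul_smul, neg_one_smul]
    rw [hneg, show ((-1 : ℂ)) ^ (k + 1 + 1) = ((-1 : ℂ)) ^ k from by
      rw [pow_succ, pow_succ]; ring]
  rw [hG]
  have e5 : (2 * (((k : ℕ) + 1 : ℕ) : ℤ) - 3) = 2 * (k : ℤ) - 1 := by push_cast; ring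
  rw [e5]
  simp only [Matrix.sub_mulVec, Matrix.mulVec_add, Matrix.mulVec_smul]
  have hpow : ((-1 : ℂ)) ^ (k + 1) = -((-1 : ℂ)) ^ k := by rw [pow_succ]; ring
  rw [hpow]
  funext x
  simp only [Pi.add_apply, Pi.sub_apply, Pi.neg_apply, Pi.smul_apply, smul_eq_mul]
  ring
end

section
/- Let B₀,…,B_m be n×n complex matrices, σ₀,…,σ_m distinct complex numbers, and λ ∈ ℂ with λ ≠ σᵢ for all i. Then λ is an eigenvalue of the Cauchy linearization pencil — i.e. there exist vectors u, v₀,…,v_m ∈ ℂⁿ, not all zero, with σᵢ • vᵢ + u = λ • vᵢ for all i and ∑_{i=0}^{m} Bᵢ vᵢ = 0 — if and only if there exists u ≠ 0 with ∑_{i=0}^{m} (λ − σᵢ)⁻¹ • (Bᵢ u) = 0, i.e. T̃(λ) is singular. -/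
open Finset

/-- `λ ∉ {σ₀,…,σ_m}` is an eigenvalue of the Cauchy linearization pencil iff the rational
interpolant `T̃(λ) = ∑ᵢ (λ - σᵢ)⁻¹ Bᵢ` is singular, i.e. annihilates some nonzero `u`. -/
theorem cauchy_linearization_eigenvalue_iff (n m : ℕ)
    (B : Fin (m + 1) → Matrix (Fin n) (Fin n) ℂ)
    (σ : Fin (m + 1) → ℂ) (hσ : Function.Injective σ)
    (lam : ℂ) (hlam : ∀ i, lam ≠ σ i) :
    (∃ (u : Fin n → ℂ) (v : Fin (m + 1) → Fin n → ℂ),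
        (u ≠ 0 ∨ ∃ i, v i ≠ 0) ∧
        (∀ i, σ i • v i + u = lam • v i) ∧
        ∑ i, (B i).mulVec (v i) = 0) ↔
      ∃ u : Fin n → ℂ, u ≠ 0 ∧ ∑ i, (lam - σ i)⁻¹ • (B i).mulVec u = 0 := by
  have hne : ∀ i, lam - σ i ≠ 0 := fun i => sub_ne_zero.mpr (hlam i)
  constructor
  · rintro ⟨u, v, hnz, heq, hsum⟩
    have hv : ∀ i, v i = (lam - σ i)⁻¹ • u := by
      intro i
      have h : (lam - σ i) • v i = u := by
        have := heq i
        rw [sub_smul]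
        linear_combination (norm := module) -this
      rw [← h, smul_smul, inv_mul_cancel₀ (hne i), one_smul]
    have hu : u ≠ 0 := by
      rcases hnz with h | ⟨i, hi⟩
      · exact h
      · intro h0
        exact hi (by rw [hv i, h0, smul_zero])
    refine ⟨u, hu, ?_⟩
    rw [← hsum]
    refine Finset.sum_congr rfl fun i _ => ?_
    rw [hv i, Matrix.mulVec_smul]
  · rintro ⟨u, hu, hsum⟩
    refine ⟨u, fun i => (lam - σ i)⁻¹ • u, Or.inl hu, fun i => ?_, ?_⟩
    · have : (lam - σ i) • ((lam - σ i)⁻¹ • u) = u := by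
        rw [smul_smul, mul_inv_cancel₀ (hne i), one_smul]
      rw [sub_smul] at this
      linear_combination (norm := module) -this
    · rw [← hsum]
      refine Finset.sum_congr rfl fun i _ => ?_
      rw [Matrix.mulVec_smul]
end

section
/- Let m ≥ 2, let B₀,…,B_m be n×n complex matrices, and λ ∈ ℂ. Then λ is an eigenvalue of the Chebyshev linearization pencil — i.e. there exist v₀,…,v_{m−1} ∈ ℂⁿ, not all zero, with v₁ = λ • v₀, v_{i−1} + v_{i+1} = 2λ • vᵢ for 1 ≤ i ≤ m−2, and −∑_{i=0}^{m−3} Bᵢ vᵢ + (B_m − B_{m−2}) v_{m−2} − B_{m−1} v_{m−1} = 2λ • (B_m v_{m−1}) — if and only if there exists u ≠ 0 with ∑_{i=0}^{m} Tᵢ(λ) • (Bᵢ u) = 0, where Tᵢ is the i-th Chebyshev polynomial of the first kind. -/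
open Finset Polynomial.Chebyshev

/-- `λ` is an eigenvalue of the Chebyshev (colleague-type) linearization pencil iff the
Chebyshev interpolant `T̃(λ) = ∑ᵢ Tᵢ(λ) Bᵢ` annihilates some nonzero vector `u`. -/
theorem chebyshev_linearization_eigenvalue_iff (n m : ℕ) (hm : 2 ≤ m)
    (B : ℕ → Matrix (Fin n) (Fin n) ℂ) (lam : ℂ) :
    (∃ v : ℕ → Fin n → ℂ,
        (∃ i, i ≤ m - 1 ∧ v i ≠ 0) ∧
        v 1 = lam • v 0 ∧
        (∀ i, 1 ≤ i → i ≤ m - 2 → v (i - 1) + v (i + 1) = (2 * lam) • v i) ∧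
        -∑ i ∈ range (m - 2), (B i).mulVec (v i)
          + (B m - B (m - 2)).mulVec (v (m - 2))
          - (B (m - 1)).mulVec (v (m - 1)) = (2 * lam) • (B m).mulVec (v (m - 1))) ↔
      ∃ u : Fin n → ℂ, u ≠ 0 ∧
        ∑ i ∈ range (m + 1), ((T ℂ i).eval lam) • (B i).mulVec u = 0 := by
  obtain ⟨k, rfl⟩ : ∃ k, m = k + 2 := ⟨m - 2, by omega⟩
  set t : ℕ → ℂ := fun i => (T ℂ i).eval lam with ht
  have ht0 : t 0 = 1 := by simp [ht]
  have ht1 : t 1 = lam := by simp [ht]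
  have htrec : ∀ i : ℕ, t (i + 2) = 2 * lam * t (i + 1) - t i := by
    intro i
    simp only [ht]
    push_cast
    rw [T_add_two]
    simp [mul_assoc]
  have hm2 : k + 2 - 2 = k := by omega
  have hm1 : k + 2 - 1 = k + 1 := by omega
  -- the key algebraic identity
  have key : ∀ u : Fin n → ℂ,
      ∑ i ∈ range (k + 2 + 1), t i • (B i).mulVec u =
        ((2 * lam) • (B (k + 2)).mulVec (t (k + 1) • u)) -
        (-∑ i ∈ range k, (B i).mulVec (t i • u)
          + (B (k + 2) - B k).mulVec (t k • u)
          - (B (k + 1)).mulVec (t (k + 1) • u)) := by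
    intro u
    have hs : ∀ j, (B j).mulVec (t j • u) = t j • (B j).mulVec u := fun j =>
      Matrix.mulVec_smul _ _ _
    rw [sum_range_succ, sum_range_succ, sum_range_succ, htrec k]
    simp only [Matrix.sub_mulVec, hs, Matrix.mulVec_smul]
    module
  constructor
  · rintro ⟨v, ⟨i, hi, hne⟩, h1, h2, h3⟩
    have hv : ∀ i, i ≤ k + 1 → v i = t i • v 0 := by
      intro i
      induction i using Nat.strong_induction_on with
      | _ i ih =>
        intro hik
        match i with
        | 0 => simp [ht0]
        | 1 => rw [h1, ht1]
        | (j + 2) =>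
          have hr := h2 (j + 1) (by omega) (by omega)
          simp only [Nat.add_sub_cancel] at hr
          have e1 := ih j (by omega) (by omega)
          have e2 := ih (j + 1) (by omega) (by omega)
          have : v (j + 2) = (2 * lam) • v (j + 1) - v j := by
            rw [← hr]; abel
          rw [this, e1, e2, htrec]
          module
    refine ⟨v 0, ?_, ?_⟩
    · intro h0
      apply hne
      rw [hv i (by omega), h0, smul_zero]
    · rw [key (v 0)]
      rw [hm2, hm1] at h3
      have hrw : ∀ j, j ≤ k + 1 → (B j).mulVec (t j • v 0) = (B j).mulVec (v j) := by
        intro j hj; rw [← hv j hj]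
      rw [sum_congr rfl fun j hj => hrw j (by simp at hj; omega),
        ← hv k (by omega), ← hv (k + 1) (by omega), ← h3, sub_self]
  · rintro ⟨u, hu, hsum⟩
    refine ⟨fun i => t i • u, ⟨0, by omega, by simpa [ht0] using hu⟩,
      by simp [ht1, ht0], ?_, ?_⟩
    · intro i h1i h2i
      obtain ⟨j, rfl⟩ : ∃ j, i = j + 1 := ⟨i - 1, by omega⟩
      simp only [Nat.add_sub_cancel]
      have := htrec j
      have : t j + t (j + 2) = 2 * lam * t (j + 1) := by rw [this]; ring
      calc t j • u + t (j + 2) • u = (t j + t (j + 2)) • u := (add_smul _ _ _).symm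
        _ = (2 * lam * t (j + 1)) • u := by rw [this]
        _ = (2 * lam) • t (j + 1) • u := by rw [mul_smul]
    · rw [hm2, hm1]
      have := key u
      rw [hsum] at this
      have := this.symm
      rw [sub_eq_zero] at this
      exact this.symm
end
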